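/- Let X be a compact metric space and let (f_n) converge uniformly to f with all f_n and f continuous. Then for every k ∈ ℕ and ε > 0 there is N such that for all n ≥ N, sup_{x∈X} d(f_{n+k} ∘ f_{n+k−1} ∘ ⋯ ∘ f_{n+1}(x), f^k(x)) < ε. -/
import Mathlib


open Filter Topology

/-- The block composition `f_{n+k} ∘ ⋯ ∘ f_{n+1}`: `block n 0 = id`,
`block n (k+1) = f_{n+k+1} ∘ block n k`. -/
def blockNA {X : Type*} (f : ℕ → X → X) (n : ℕ) : ℕ → X → X
  | 0 => id
  | k + 1 => f (n + k + 1) ∘ blockNA f n k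

/-- If `f_n → f` uniformly on a compact metric space with all maps continuous, then for every
`k` and `ε > 0` there is `N` such that for all `n ≥ N`,
`sup_x d(f_{n+k} ∘ ⋯ ∘ f_{n+1}(x), f^k(x)) < ε`. -/
theorem stmt17 {X : Type*} [MetricSpace X] [CompactSpace X]
    (f : ℕ → X → X) (g : X → X)
    (hf : ∀ n, Continuous (f n)) (hg : Continuous g)
    (hconv : TendstoUniformly f g atTop) :
    ∀ (k : ℕ), ∀ ε > (0 : ℝ), ∃ N : ℕ, ∀ n ≥ N, ∀ x : X,
      dist (blockNA f n k x) (g^[k] x) < ε := by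
  have hgu : UniformContinuous g := CompactSpace.uniformContinuous_of_continuous hg
  rw [Metric.uniformContinuous_iff] at hgu
  have hcv : ∀ ε > (0:ℝ), ∃ N, ∀ n ≥ N, ∀ x, dist (f n x) (g x) < ε := by
    intro ε hε
    have := (Metric.tendstoUniformly_iff.mp hconv ε hε).exists_forall_of_atTop
    obtain ⟨N, hN⟩ := this
    exact ⟨N, fun n hn x => by simpa [dist_comm] using hN n hn x⟩
  intro k
  induction k with
  | zero =>
    intro ε hε
    exact ⟨0, fun n _ x => by simpa [blockNA] using hε⟩
  | succ k ih =>
    intro ε hε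
    obtain ⟨δ, hδ, hδg⟩ := hgu (ε/2) (half_pos hε)
    obtain ⟨N1, hN1⟩ := ih δ hδ
    obtain ⟨N2, hN2⟩ := hcv (ε/2) (half_pos hε)
    refine ⟨max N1 N2, fun n hn x => ?_⟩
    have h1 : dist (blockNA f n k x) (g^[k] x) < δ :=
      hN1 n (le_trans (le_max_left _ _) hn) x
    have h2 : dist (f (n+k+1) (blockNA f n k x)) (g (blockNA f n k x)) < ε/2 :=
      hN2 (n+k+1) (le_trans (le_trans (le_max_right _ _) hn) (by omega)) _
    have h3 : dist (g (blockNA f n k x)) (g (g^[k] x)) < ε/2 := hδg h1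
    have : blockNA f n (k+1) x = f (n+k+1) (blockNA f n k x) := rfl
    rw [this, Function.iterate_succ_apply']
    calc dist (f (n+k+1) (blockNA f n k x)) (g (g^[k] x))
        ≤ dist (f (n+k+1) (blockNA f n k x)) (g (blockNA f n k x))
          + dist (g (blockNA f n k x)) (g (g^[k] x)) := dist_triangle _ _ _
      _ < ε/2 + ε/2 := add_lt_add h2 h3
      _ = ε := add_halves ε
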